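/- Let (Ω, 𝒜, μ) and (𝒳, ℬ, P) be probability spaces, let θ : 𝒳 × Ω → ℝ be jointly measurable, and let γ ∈ ℝ. Define g(x, ω) = 1{θ(x, ω) ≤ γ}, the estimator p̂(ω) = ∫_𝒳 g(x, ω) dP(x), the pointwise posterior probability p(x) = μ{ω : θ(x, ω) ≤ γ}, and the point-variance function h(x) = p(x)(1 − p(x)). Then Var_μ(p̂) ≤ ∫_𝒳 h(x) dP(x). -/

import Mathlib

/-!
The centred estimator is an average of centred indicators: by Fubini,
`p̂(ω) - E p̂ = ∫ (g(x, ω) - p(x)) dP(x)`. Jensen's inequality for `P` bounds its square by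
`∫ (g(x, ω) - p(x))² dP(x)`; integrating over `μ` and swapping the integrals turns this into
`∫ Var_μ(g(x, ·)) dP(x)`, and an indicator of probability `p(x)` has variance `p(x)(1 - p(x))`.
-/

open MeasureTheory ProbabilityTheory

section

variable {α : Type*} [MeasurableSpace α] {μ : Measure α}

theorem sq_integral_le_integral_sq [IsProbabilityMeasure μ] {f : α → ℝ} (hf : MemLp f 2 μ) :
    (∫ a, f a ∂μ) ^ 2 ≤ ∫ a, f a ^ 2 ∂μ := by
  have hvar := variance_nonneg f μ
  rw [variance_eq_sub hf] at hvar
  simp only [Pi.pow_apply] at hvar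
  linarith

theorem variance_indicator_one [IsProbabilityMeasure μ] {s : Set α} (hs : MeasurableSet s) :
    Var[s.indicator 1; μ] = μ.real s * (1 - μ.real s) := by
  have hsq : s.indicator (1 : α → ℝ) ^ 2 = s.indicator 1 := by
    ext a
    by_cases ha : a ∈ s <;> simp [ha]
  rw [variance_eq_sub ((memLp_const (1 : ℝ)).indicator hs : MemLp (s.indicator 1) 2 μ), hsq,
    integral_indicator_one hs]
  ring

end

section

variable {Ω 𝒳 : Type*} [MeasurableSpace Ω] [MeasurableSpace 𝒳] {μ : Measure Ω} {P : Measure 𝒳}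

theorem variance_integral_le_integral_variance [IsFiniteMeasure μ] [IsProbabilityMeasure P]
    {F : 𝒳 × Ω → ℝ} (hF : Measurable F) {C : ℝ} (hFC : ∀ q, |F q| ≤ C) :
    Var[fun ω ↦ ∫ x, F (x, ω) ∂P; μ] ≤ ∫ x, Var[fun ω ↦ F (x, ω); μ] ∂P := by
  set m : 𝒳 → ℝ := fun x ↦ ∫ ω, F (x, ω) ∂μ
  set D : 𝒳 × Ω → ℝ := fun q ↦ F q - m q.1
  have hm : Measurable m := hF.stronglyMeasurable.integral_prod_right'.measurable
  have hmC (x : 𝒳) : |m x| ≤ C * μ.real Set.univ :=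
    norm_integral_le_of_norm_le_const (f := fun ω ↦ F (x, ω)) (.of_forall fun ω ↦ hFC (x, ω))
  have hD : Measurable D := hF.sub (hm.comp measurable_fst)
  have hDC (q : 𝒳 × Ω) : |D q| ≤ C + C * μ.real Set.univ :=
    (abs_sub _ _).trans (add_le_add (hFC q) (hmC q.1))
  have hF_int : Integrable F (P.prod μ) := .of_bound hF.aestronglyMeasurable C (.of_forall hFC)
  have hD_sq_int : Integrable (fun q ↦ D q ^ 2) (P.prod μ) :=
    .of_bound (hD.pow_const 2).aestronglyMeasurable _ (.of_forall fun q ↦ by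
      rw [Real.norm_eq_abs, abs_pow]
      exact pow_le_pow_left₀ (abs_nonneg _) (hDC q) 2)
  have hmean : μ[fun ω ↦ ∫ x, F (x, ω) ∂P] = ∫ x, m x ∂P :=
    (integral_integral_swap (f := fun x ω ↦ F (x, ω)) hF_int).symm
  have hdev (ω : Ω) : ∫ x, F (x, ω) ∂P - ∫ x, m x ∂P = ∫ x, D (x, ω) ∂P :=
    (integral_sub (.of_bound (hF.comp measurable_prodMk_right).aestronglyMeasurable C
      (.of_forall fun x ↦ hFC (x, ω))) hF_int.integral_prod_left).symm
  have hjensen (ω : Ω) :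
      (∫ x, F (x, ω) ∂P - ∫ x, m x ∂P) ^ 2 ≤ ∫ x, D (x, ω) ^ 2 ∂P := by
    rw [hdev]
    exact sq_integral_le_integral_sq (.of_bound
      (hD.comp measurable_prodMk_right).aestronglyMeasurable _ (.of_forall fun x ↦ hDC (x, ω)))
  calc Var[fun ω ↦ ∫ x, F (x, ω) ∂P; μ]
      = ∫ ω, (∫ x, F (x, ω) ∂P - ∫ x, m x ∂P) ^ 2 ∂μ := by
        rw [variance_eq_integral
          hF.stronglyMeasurable.integral_prod_left'.measurable.aemeasurable, hmean]
    _ ≤ ∫ ω, ∫ x, D (x, ω) ^ 2 ∂P ∂μ :=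
        integral_mono_of_nonneg (.of_forall fun _ ↦ sq_nonneg _) hD_sq_int.integral_prod_right
          (.of_forall hjensen)
    _ = ∫ x, ∫ ω, D (x, ω) ^ 2 ∂μ ∂P :=
        (integral_integral_swap (f := fun x ω ↦ D (x, ω) ^ 2) hD_sq_int).symm
    _ = ∫ x, Var[fun ω ↦ F (x, ω); μ] ∂P := by
        congr 1 with x
        exact (variance_eq_integral (hF.comp measurable_prodMk_left).aemeasurable).symm

end

/-- Proposition 1: the variance of the Bayesian rate estimator
`p̂(ω) = ∫ 1{θ(x,ω) ≤ γ} dP(x)` is bounded by the average point variance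
`∫ p(x)(1 - p(x)) dP(x)`, where `p(x) = μ{ω : θ(x,ω) ≤ γ}`. -/
theorem variance_rate_estimator_le_avg_point_variance
    {Ω 𝒳 : Type*} [MeasurableSpace Ω] [MeasurableSpace 𝒳]
    (μ : Measure Ω) (P : Measure 𝒳) [IsProbabilityMeasure μ] [IsProbabilityMeasure P]
    (θ : 𝒳 × Ω → ℝ) (hθ : Measurable θ) (γ : ℝ)
    (g : 𝒳 → Ω → ℝ) (hg : ∀ x ω, g x ω = if θ (x, ω) ≤ γ then 1 else 0)
    (phat : Ω → ℝ) (hphat : ∀ ω, phat ω = ∫ x, g x ω ∂P)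
    (p : 𝒳 → ℝ) (hp : ∀ x, p x = (μ {ω | θ (x, ω) ≤ γ}).toReal)
    (h : 𝒳 → ℝ) (hh : ∀ x, h x = p x * (1 - p x)) :
    variance phat μ ≤ ∫ x, h x ∂P := by
  set S := {q : 𝒳 × Ω | θ q ≤ γ}
  have hS : MeasurableSet S := measurableSet_le hθ measurable_const
  have hphat_eq : phat = fun ω ↦ ∫ x, S.indicator 1 (x, ω) ∂P := by
    ext ω
    simp only [hphat, hg, Set.indicator_apply, S, Set.mem_ofPred_eq, Pi.one_apply]
  have hh_eq : h = fun x ↦ Var[fun ω ↦ S.indicator 1 (x, ω); μ] := by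
    ext x
    rw [hh, hp, ← measureReal_def]
    exact (variance_indicator_one (measurable_prodMk_left hS)).symm
  rw [hphat_eq, hh_eq]
  refine variance_integral_le_integral_variance (measurable_one.indicator hS) (C := 1) fun q ↦ ?_
  by_cases hq : q ∈ S <;> simp [hq]
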